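/- If the regression function is additive, m(X) = Σ_k m_k(X^{(k)}), then the marginal total Sobol index dominates the total Sobol index: E[Var(m(X_{π_j}) | X^{(-j)})] ≥ E[Var(m(X) | X^{(-j)})]. -/

import Mathlib

/-!
Write `Y = m_j(X^{(j)})`, `Y' = m_j(X')` and `S` for the sum of the other summands. Since `S` is
`X^{(-j)}`-measurable, it drops out of both conditional variances. As `Y'` is independent of
`X^{(-j)}`, its conditional variance is the constant `Var Y' = Var Y`, whereas by the law of total
variance `E[Var(Y | X^{(-j)})] ≤ Var Y`.
-/

open MeasureTheory ProbabilityTheory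
open scoped ENNReal NNReal

noncomputable section

/-- The σ-algebra generated by the components of `X` other than the `j`-th. -/
def sigmaWithout {Ω : Type*} [MeasurableSpace Ω] {p : ℕ} (X : Ω → Fin p → ℝ) (j : Fin p) :
    MeasurableSpace Ω :=
  MeasurableSpace.comap (fun ω => fun k : {k : Fin p // k ≠ j} => X ω (k : Fin p)) inferInstance

/-- `X_{π_j}` : the vector `X` with its `j`-th component replaced by `X'`. -/
def permuted {Ω : Type*} {p : ℕ} (X : Ω → Fin p → ℝ) (j : Fin p) (X' : Ω → ℝ) :
    Ω → Fin p → ℝ :=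
  fun ω => Function.update (X ω) j (X' ω)

namespace ProbabilityTheory

variable {Ω : Type*} {m₀ m m₁ : MeasurableSpace Ω} {μ : Measure[m₀] Ω} {X Y : Ω → ℝ}

lemma condVar_add_of_stronglyMeasurable (hm : m ≤ m₀) [SigmaFinite (μ.trim hm)]
    (hX : Integrable X μ) (hY : StronglyMeasurable[m] Y) (hYint : Integrable Y μ) :
    Var[X + Y; μ | m] =ᵐ[μ] Var[X; μ | m] := by
  refine condExp_congr_ae ?_
  filter_upwards [condExp_add hX hYint m] with ω hω
  simp only [Pi.pow_apply, Pi.sub_apply, Pi.add_apply, hω,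
    condExp_of_stronglyMeasurable hm hY hYint]
  ring

lemma condVar_ae_eq_variance_of_indep (hm₁ : m₁ ≤ m₀) (hm : m ≤ m₀) [SigmaFinite (μ.trim hm)]
    (hX : StronglyMeasurable[m₁] X) (hindep : Indep m₁ m μ) :
    Var[X; μ | m] =ᵐ[μ] fun _ => Var[X; μ] := by
  have hcentred : (X - μ[X | m]) ^ 2 =ᵐ[μ] fun ω => (X ω - μ[X]) ^ 2 := by
    filter_upwards [condExp_indep_eq hm₁ hm hX hindep] with ω hω
    simp only [Pi.pow_apply, Pi.sub_apply, hω]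
  rw [variance_eq_integral (hX.mono hm₁).measurable.aemeasurable]
  exact (condExp_congr_ae hcentred).trans
    (condExp_indep_eq hm₁ hm ((hX.sub stronglyMeasurable_const).pow 2) hindep)

lemma integral_condVar_le_variance (hm : m ≤ m₀) [IsProbabilityMeasure μ] (hX : MemLp X 2 μ) :
    μ[Var[X; μ | m]] ≤ Var[X; μ] := by
  rw [← integral_condVar_add_variance_condExp hm hX]
  exact le_add_of_nonneg_right (variance_nonneg _ _)

lemma integral_condVar (hm : m ≤ m₀) [SigmaFinite (μ.trim hm)] (X : Ω → ℝ) :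
    μ[Var[X; μ | m]] = ∫ ω, (X ω - (μ[X | m]) ω) ^ 2 ∂μ :=
  integral_condExp hm

end ProbabilityTheory

lemma sum_permuted_apply {Ω : Type*} {p : ℕ} (X : Ω → Fin p → ℝ) (j : Fin p) (X' : Ω → ℝ)
    (f : Fin p → ℝ → ℝ) (ω : Ω) :
    ∑ k, f k (permuted X j X' ω k) = f j (X' ω) + ∑ k ∈ Finset.univ.erase j, f k (X ω k) := by
  rw [← Finset.add_sum_erase _ _ (Finset.mem_univ j)]
  congr 1
  · simp [permuted]
  · refine Finset.sum_congr rfl fun k hk => ?_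
    rw [permuted, Function.update_of_ne (Finset.ne_of_mem_erase hk)]

section SigmaWithout

variable {Ω : Type*} [MeasurableSpace Ω] {p : ℕ}

lemma sigmaWithout_le_comap (X : Ω → Fin p → ℝ) (j : Fin p) :
    sigmaWithout X j ≤ MeasurableSpace.comap X inferInstance :=
  ((measurable_pi_lambda (fun v : Fin p → ℝ => fun k : {k // k ≠ j} => v k) fun _ =>
    measurable_pi_apply _).comp (comap_measurable X)).comap_le

lemma sigmaWithout_le {X : Ω → Fin p → ℝ} (hX : Measurable X) (j : Fin p) :
    sigmaWithout X j ≤ ‹_› :=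
  (sigmaWithout_le_comap X j).trans hX.comap_le

lemma measurable_sigmaWithout_apply (X : Ω → Fin p → ℝ) {j k : Fin p} (hk : k ≠ j) :
    Measurable[sigmaWithout X j] fun ω => X ω k :=
  (measurable_pi_apply (⟨k, hk⟩ : {k // k ≠ j})).comp
    (comap_measurable fun ω (i : {k // k ≠ j}) => X ω i)

lemma measurable_sigmaWithout_sum_erase (X : Ω → Fin p → ℝ) (j : Fin p) {f : Fin p → ℝ → ℝ}
    (hf : ∀ k, Measurable (f k)) :
    Measurable[sigmaWithout X j] fun ω => ∑ k ∈ Finset.univ.erase j, f k (X ω k) :=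
  Finset.measurable_sum _ fun k hk =>
    (hf k).comp (measurable_sigmaWithout_apply X (Finset.ne_of_mem_erase hk))

lemma ProbabilityTheory.IndepFun.indep_comap_sigmaWithout {μ : Measure Ω} {X : Ω → Fin p → ℝ} {X' : Ω → ℝ}
    (hindep : IndepFun X' X μ) (j : Fin p) {f : ℝ → ℝ} (hf : Measurable f) :
    Indep (MeasurableSpace.comap (f ∘ X') inferInstance) (sigmaWithout X j) μ :=
  indep_of_indep_of_le_left (indep_of_indep_of_le_right hindep (sigmaWithout_le_comap X j))
    (hf.comp (comap_measurable X')).comap_le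

end SigmaWithout

/-- If the regression function is additive, the marginal total Sobol index dominates
the total Sobol index: `E[Var(m(X_{π_j}) | X^{(-j)})] ≥ E[Var(m(X) | X^{(-j)})]`. -/
theorem marginal_total_sobol_ge_total_sobol_of_additive
    {Ω : Type*} [MeasureSpace Ω] [IsProbabilityMeasure (ℙ : Measure Ω)]
    {p : ℕ} (j : Fin p) (X : Ω → Fin p → ℝ) (X' : Ω → ℝ)
    (mk : Fin p → ℝ → ℝ) (hmk : ∀ k, Measurable (mk k))
    (hL2 : ∀ k, MemLp (fun ω => mk k (X ω k)) 2 ℙ)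
    (hX : Measurable X) (hX' : Measurable X')
    -- `X'` is an independent copy of the `j`-th component of `X`
    (hcopy : Measure.map X' ℙ = Measure.map (fun ω => X ω j) ℙ)
    (hindep : IndepFun X' X ℙ) :
    ∫ ω, ((∑ k, mk k (permuted X j X' ω k))
        - (ℙ[fun ω' => ∑ k, mk k (permuted X j X' ω' k) | sigmaWithout X j]) ω) ^ 2 ∂ℙ
      ≥ ∫ ω, ((∑ k, mk k (X ω k))
        - (ℙ[fun ω' => ∑ k, mk k (X ω' k) | sigmaWithout X j]) ω) ^ 2 ∂ℙ := by
  have hm := sigmaWithout_le hX j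
  set Y : Ω → ℝ := fun ω => mk j (X ω j)
  set Y' : Ω → ℝ := fun ω => mk j (X' ω)
  set S : Ω → ℝ := fun ω => ∑ k ∈ Finset.univ.erase j, mk k (X ω k)
  have hsum : (fun ω => ∑ k, mk k (X ω k)) = Y + S :=
    funext fun ω => (Finset.add_sum_erase _ _ (Finset.mem_univ j)).symm
  have hsum' : (fun ω => ∑ k, mk k (permuted X j X' ω k)) = Y' + S :=
    funext (sum_permuted_apply X j X' mk)
  have hS : StronglyMeasurable[sigmaWithout X j] S :=
    (measurable_sigmaWithout_sum_erase X j hmk).stronglyMeasurable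
  have hSint : Integrable S ℙ := (memLp_finsetSum _ fun k _ => hL2 k).integrable one_le_two
  have hident : IdentDistrib Y' Y ℙ ℙ :=
    IdentDistrib.comp ⟨hX'.aemeasurable, ((measurable_pi_apply j).comp hX).aemeasurable, hcopy⟩
      (hmk j)
  calc ∫ ω, (∑ k, mk k (X ω k) - (ℙ[fun ω' => ∑ k, mk k (X ω' k) | sigmaWithout X j]) ω) ^ 2 ∂ℙ
      = ℙ[Var[Y + S; ℙ | sigmaWithout X j]] := by rw [← hsum, integral_condVar hm]
    _ = ℙ[Var[Y; ℙ | sigmaWithout X j]] :=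
      integral_congr_ae (condVar_add_of_stronglyMeasurable hm ((hL2 j).integrable one_le_two)
        hS hSint)
    _ ≤ Var[Y; ℙ] := integral_condVar_le_variance hm (hL2 j)
    _ = Var[Y'; ℙ] := hident.variance_eq.symm
    _ = ℙ[Var[Y'; ℙ | sigmaWithout X j]] := by
      rw [integral_congr_ae (condVar_ae_eq_variance_of_indep ((hmk j).comp hX').comap_le hm
        (comap_measurable Y').stronglyMeasurable (hindep.indep_comap_sigmaWithout j (hmk j)))]
      simp
    _ = ℙ[Var[Y' + S; ℙ | sigmaWithout X j]] :=
      (integral_congr_ae (condVar_add_of_stronglyMeasurable hm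
        (hident.integrable_iff.mpr ((hL2 j).integrable one_le_two)) hS hSint)).symm
    _ = _ := by rw [← hsum', integral_condVar hm]
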